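/- arXiv:2208.06288 — 2 statements merged into one kernel-verified Lean document; each statement's English description precedes it below -/
import Mathlib

section
/- If there exists a π-base Souslin scheme on a topological space X that covers X and has a selector, then X is a continuous open image of a π-space. -/
open Set Topology

namespace PiSpacePaper

/-- The restriction `p↾n` of `p : ℕ → ℕ`, as a list of length `n`. -/
def restrictSeq (p : ℕ → ℕ) (n : ℕ) : List ℕ := (List.range n).map p

/-- The basic clopen set `S_a` of the Baire space. -/
def cyl (a : List ℕ) : Set (ℕ → ℕ) := {p | restrictSeq p a.length = a}

/-- The fruit `⋂ n, V (p↾n)` of a branch `p` in a Souslin scheme `V`. -/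
def fruit {X : Type*} (V : List ℕ → Set X) (p : ℕ → ℕ) : Set X :=
  ⋂ n : ℕ, V (restrictSeq p n)

/-- A Souslin scheme `V` covers the set `s`. -/
def Covers {X : Type*} (V : List ℕ → Set X) (s : Set X) : Prop :=
  V [] = s ∧ ∀ a : List ℕ, V a = ⋃ n : ℕ, V (a ++ [n])

/-- A Souslin scheme `V` partitions the set `s`. -/
def Partitions {X : Type*} (V : List ℕ → Set X) (s : Set X) : Prop :=
  Covers V s ∧ ∀ (a : List ℕ) (n m : ℕ), n ≠ m → V (a ++ [n]) ∩ V (a ++ [m]) = ∅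

/-- A Souslin scheme is complete iff all fruits are nonempty. -/
def Complete {X : Type*} (V : List ℕ → Set X) : Prop :=
  ∀ p : ℕ → ℕ, (fruit V p).Nonempty

/-- A Souslin scheme has strict branches iff every fruit is a singleton. -/
def StrictBranches {X : Type*} (V : List ℕ → Set X) : Prop :=
  ∀ p : ℕ → ℕ, ∃ x : X, fruit V p = {x}

/-- A Souslin scheme is open iff all its members are open sets. -/
def OpenScheme {X : Type*} [TopologicalSpace X] (V : List ℕ → Set X) : Prop :=
  ∀ a : List ℕ, IsOpen (V a)

/-- `flesh V = ⋃ a, V a`. -/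
def flesh {X : Type*} (V : List ℕ → Set X) : Set X := ⋃ a : List ℕ, V a

/-- `branches V x = {q ∈ ℕ^ℕ : x ∈ fruit V q}`. -/
def branches {X : Type*} (V : List ℕ → Set X) (x : X) : Set (ℕ → ℕ) :=
  {q | x ∈ fruit V q}

/-- A family `γ` of subsets is a π-net for a space: all members are nonempty and every
nonempty open set contains a member. -/
def IsPiNet {X : Type*} [TopologicalSpace X] (γ : Set (Set X)) : Prop :=
  (∀ G ∈ γ, G.Nonempty) ∧
  ∀ U : Set X, IsOpen U → U.Nonempty → ∃ G ∈ γ, G ⊆ U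

/-- A family `γ` of subsets is a π-base for a space: all members are nonempty open sets
and every nonempty open set contains a member. -/
def IsPiBase {X : Type*} [TopologicalSpace X] (γ : Set (Set X)) : Prop :=
  (∀ G ∈ γ, IsOpen G ∧ G.Nonempty) ∧
  ∀ U : Set X, IsOpen U → U.Nonempty → ∃ G ∈ γ, G ⊆ U

/-- A π-space: there is an open Souslin scheme that partitions the space, has strict
branches, and whose family of members is a π-base. -/
def IsPiSpace (X : Type*) [TopologicalSpace X] : Prop :=
  ∃ V : List ℕ → Set X, OpenScheme V ∧ Partitions V Set.univ ∧ StrictBranches V ∧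
    IsPiBase {S : Set X | ∃ a : List ℕ, S = V a}

/-- A Lusin π-base for a space. -/
def IsLusinPiBase {X : Type*} [TopologicalSpace X] (V : List ℕ → Set X) : Prop :=
  OpenScheme V ∧ Partitions V Set.univ ∧ StrictBranches V ∧
  ∀ (x : X) (U : Set X), IsOpen U → x ∈ U →
    ∃ (a : List ℕ) (n : ℕ), x ∈ V a ∧ (⋃ i : ℕ, ⋃ _ : n ≤ i, V (a ++ [i])) ⊆ U

/-- A map is quasi-open iff the image of every nonempty open set has nonempty interior. -/
def IsQuasiOpen {X Y : Type*} [TopologicalSpace X] [TopologicalSpace Y] (f : X → Y) : Prop :=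
  ∀ U : Set X, IsOpen U → U.Nonempty → (interior (f '' U)).Nonempty

/-- A π-net Souslin scheme on a space `X`: for every finite sequence `a`, the family
`{V b : b ⊒ a}` is a π-net for the subspace `V a` of `X` (whose nonempty open sets are
exactly the nonempty sets `U ∩ V a` with `U` open in `X`). -/
def IsPiNetScheme {X : Type*} [TopologicalSpace X] (V : List ℕ → Set X) : Prop :=
  ∀ a : List ℕ,
    (∀ b : List ℕ, a <+: b → (V b).Nonempty) ∧
    ∀ U : Set X, IsOpen U → (U ∩ V a).Nonempty → ∃ b : List ℕ, a <+: b ∧ V b ⊆ U ∩ V a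

/-- A π-base Souslin scheme on a space is an open π-net Souslin scheme. -/
def IsPiBaseScheme {X : Type*} [TopologicalSpace X] (V : List ℕ → Set X) : Prop :=
  OpenScheme V ∧ IsPiNetScheme V

/-- A selector on a Souslin scheme `V`: a surjection of the Baire space onto `flesh V`
such that every fiber `f⁻¹(x)` is a dense subset of the subspace `branches V x` of the
Baire space. -/
def IsSelector {X : Type*} (V : List ℕ → Set X) (f : (ℕ → ℕ) → X) : Prop :=
  Set.range f = flesh V ∧
  ∀ x ∈ flesh V, f ⁻¹' {x} ⊆ branches V x ∧ branches V x ⊆ closure (f ⁻¹' {x})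

/-- The topology `σ_{τ,f}` on the Baire space, generated by the subbase consisting of the
`τ`-preimages under `f` together with the basic sets `S_a`. -/
def sigmaTop {X : Type*} [TopologicalSpace X] (f : (ℕ → ℕ) → X) :
    TopologicalSpace (ℕ → ℕ) :=
  TopologicalSpace.generateFrom
    ({S : Set (ℕ → ℕ) | ∃ U : Set X, IsOpen U ∧ S = f ⁻¹' U} ∪
      {S : Set (ℕ → ℕ) | ∃ a : List ℕ, S = cyl a})

/-- The Souslin scheme `V^g`, where `V^g_a = V_{g ∘ a}`. -/
def schemeComp {X : Type*} (V : List ℕ → Set X) (g : ℕ → ℕ) : List ℕ → Set X :=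
  fun a => V (a.map g)

/-- A subset of the Baire space is dense-in-itself iff it has no isolated points. -/
def DenseInItself (B : Set (ℕ → ℕ)) : Prop :=
  ∀ q ∈ B, q ∈ closure (B \ {q})

/-- `X` is a continuous open image of a π-space. -/
def IsContinuousOpenImageOfPiSpace (X : Type) [TopologicalSpace X] : Prop :=
  ∃ (Y : Type) (_ : TopologicalSpace Y) (f : Y → X),
    IsPiSpace Y ∧ Continuous f ∧ IsOpenMap f ∧ Function.Surjective f

/-- The topology `τ_N` on the Baire space generated by the sets `U \ A` with `U` open in
the Baire space and `A` nowhere dense in the Baire space. -/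
def tauN : TopologicalSpace (ℕ → ℕ) :=
  TopologicalSpace.generateFrom
    {S : Set (ℕ → ℕ) | ∃ U A : Set (ℕ → ℕ), IsOpen U ∧ IsNowhereDense A ∧ S = U \ A}

lemma restrictSeq_length (p : ℕ → ℕ) (n : ℕ) : (restrictSeq p n).length = n := by
  simp [restrictSeq]

lemma restrictSeq_getElem (p : ℕ → ℕ) {n i : ℕ} (h : i < n) :
    (restrictSeq p n)[i]'(by simp [restrictSeq_length, h]) = p i := by
  simp [restrictSeq]

lemma restrictSeq_succ (p : ℕ → ℕ) (n : ℕ) :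
    restrictSeq p (n + 1) = restrictSeq p n ++ [p n] := by
  simp [restrictSeq, List.range_succ]

lemma restrictSeq_take (p : ℕ → ℕ) {m n : ℕ} (h : m ≤ n) :
    (restrictSeq p n).take m = restrictSeq p m := by
  simp [restrictSeq, ← List.map_take, List.take_range, Nat.min_eq_left h]

lemma restrictSeq_prefix (p : ℕ → ℕ) {m n : ℕ} (h : m ≤ n) :
    restrictSeq p m <+: restrictSeq p n := by
  rw [← restrictSeq_take p h]; exact List.take_prefix _ _

lemma mem_cyl {p : ℕ → ℕ} {a : List ℕ} : p ∈ cyl a ↔ restrictSeq p a.length = a :=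
  Iff.rfl

lemma mem_cyl_restrict (p : ℕ → ℕ) (n : ℕ) : p ∈ cyl (restrictSeq p n) := by
  rw [mem_cyl, restrictSeq_length]

lemma cyl_mono {a b : List ℕ} (h : a <+: b) : cyl b ⊆ cyl a := by
  intro p hp
  rw [mem_cyl] at hp ⊢
  have hlen : a.length ≤ b.length := h.length_le
  rw [← restrictSeq_take p hlen, hp]
  exact (List.prefix_iff_eq_take.mp h).symm

lemma cyl_nonempty (a : List ℕ) : (cyl a).Nonempty := by
  refine ⟨fun i => a.getD i 0, ?_⟩
  rw [mem_cyl]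
  apply List.ext_getElem (by simp [restrictSeq_length])
  intro i h1 h2
  rw [restrictSeq_getElem _ (by simpa [restrictSeq_length] using h1)]
  exact List.getD_eq_getElem a 0 h2

lemma prefix_of_mem_cyl {p : ℕ → ℕ} {a : List ℕ} {n : ℕ} (hp : p ∈ cyl a)
    (h : a.length ≤ n) : a <+: restrictSeq p n := by
  rw [mem_cyl] at hp
  rw [← hp]; exact restrictSeq_prefix p h

lemma cyl_nil : cyl [] = Set.univ := by
  ext p; simp [cyl, restrictSeq]

lemma cyl_succ_eq (a : List ℕ) : cyl a = ⋃ n : ℕ, cyl (a ++ [n]) := by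
  ext p
  constructor
  · intro hp
    refine Set.mem_iUnion.mpr ⟨p a.length, ?_⟩
    rw [mem_cyl] at hp ⊢
    simp only [List.length_append, List.length_singleton]
    rw [restrictSeq_succ, hp]
  · intro hp
    obtain ⟨n, hn⟩ := Set.mem_iUnion.mp hp
    exact cyl_mono ⟨[n], rfl⟩ hn

lemma cyl_disjoint {a : List ℕ} {n m : ℕ} (h : n ≠ m) :
    cyl (a ++ [n]) ∩ cyl (a ++ [m]) = ∅ := by
  ext p
  simp only [Set.mem_inter_iff, Set.mem_empty_iff_false, iff_false, not_and]
  intro h1 h2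
  rw [mem_cyl] at h1 h2
  simp only [List.length_append, List.length_singleton] at h1 h2
  rw [h1] at h2
  exact h (by simpa using List.append_inj_right h2 rfl)

lemma fruit_cyl (p : ℕ → ℕ) : fruit cyl p = {p} := by
  ext q
  simp only [fruit, Set.mem_iInter, Set.mem_singleton_iff]
  constructor
  · intro h
    funext i
    have := h (i + 1)
    rw [mem_cyl, restrictSeq_length] at this
    have h1 := restrictSeq_getElem q (Nat.lt_succ_self i)
    have h2 := restrictSeq_getElem p (Nat.lt_succ_self i)
    rw [← h1, ← h2]
    simp only [this]
  · rintro rfl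
    exact fun n => mem_cyl_restrict q n


lemma scheme_anti {X : Type*} {V : List ℕ → Set X} {s : Set X} (hcov : Covers V s)
    {a b : List ℕ} (h : a <+: b) : V b ⊆ V a := by
  obtain ⟨t, rfl⟩ := h
  induction t using List.reverseRecOn with
  | nil => simp
  | append_singleton t n ih =>
    rw [← List.append_assoc]
    refine subset_trans ?_ ih
    rw [hcov.2 (a ++ t)]
    exact Set.subset_iUnion (fun k => V ((a ++ t) ++ [k])) n

lemma exists_branch {X : Type*} {V : List ℕ → Set X} (hcov : Covers V Set.univ)
    {x : X} {a : List ℕ} (ha : x ∈ V a) :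
    ∃ p : ℕ → ℕ, p ∈ cyl a ∧ x ∈ fruit V p := by
  classical
  have step : ∀ b : List ℕ, x ∈ V b → ∃ n, x ∈ V (b ++ [n]) := by
    intro b hb
    rw [hcov.2 b] at hb
    simpa using hb
  choose g hg using step
  let L : ℕ → {l : List ℕ // x ∈ V l} := fun n =>
    Nat.rec ⟨a, ha⟩ (fun _ ih => ⟨ih.1 ++ [g ih.1 ih.2], hg ih.1 ih.2⟩) n
  have hL0 : (L 0).1 = a := rfl
  have hLsucc : ∀ n, (L (n + 1)).1 = (L n).1 ++ [g (L n).1 (L n).2] := fun n => rfl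
  have hlen : ∀ n, (L n).1.length = a.length + n := by
    intro n
    induction n with
    | zero => simp [hL0]
    | succ n ih => rw [hLsucc, List.length_append, ih]; simp; omega
  have hmono : ∀ m n, m ≤ n → (L m).1 <+: (L n).1 := by
    intro m n h
    induction h with
    | refl => exact List.prefix_refl _
    | step h ih => exact ih.trans ⟨_, (hLsucc _).symm⟩
  set p : ℕ → ℕ := fun i => (L (i + 1)).1.getD i 0 with hp
  have hlen' : ∀ n i, i < a.length + n → i < (L n).1.length := fun n i h =>
    lt_of_lt_of_eq h (hlen n).symm
  have hpi : ∀ n i, ∀ hi : i < a.length + n, p i = (L n).1[i]'(hlen' n i hi) := by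
    intro n i hi
    have hbase : p i = (L (i + 1)).1[i]'(hlen' (i + 1) i (by omega)) := by
      rw [hp]
      exact List.getD_eq_getElem _ 0 (hlen' (i + 1) i (by omega))
    rcases le_total (i + 1) n with h | h
    · rw [hbase]
      exact (hmono _ _ h).getElem (hlen' (i + 1) i (by omega))
    · rw [hbase]
      exact ((hmono _ _ h).getElem (hlen' n i hi)).symm
  have hrs : ∀ n m, n ≤ a.length + m → restrictSeq p n = (L m).1.take n := by
    intro n m hnm
    apply List.ext_getElem (by rw [restrictSeq_length, List.length_take, hlen]; omega)
    intro i h1 h2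
    rw [restrictSeq_getElem p (by rwa [restrictSeq_length] at h1)]
    rw [List.getElem_take]
    exact hpi m i (by rw [restrictSeq_length] at h1; omega)
  constructor
  · constructor
    · rw [mem_cyl, hrs a.length 0 (by omega), hL0]
      simp
    · rw [fruit, Set.mem_iInter]
      intro n
      have := hrs n n (by omega)
      rw [this]
      exact scheme_anti hcov (List.take_prefix _ _) (L n).2

lemma mem_cyl_iff {p : ℕ → ℕ} {a : List ℕ} :
    p ∈ cyl a ↔ ∀ i (h : i < a.length), p i = a[i] := by
  constructor
  · intro h i hi
    rw [← restrictSeq_getElem p hi]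
    exact (List.getElem_of_eq h.symm hi).symm
  · intro h
    rw [mem_cyl]
    apply List.ext_getElem (by simp [restrictSeq_length])
    intro i h1 h2
    rw [restrictSeq_getElem p (by simpa [restrictSeq_length] using h1)]
    exact h i h2

lemma isOpen_cyl (a : List ℕ) : IsOpen (cyl a) := by
  have : cyl a = ⋂ i : Fin a.length, (fun p : ℕ → ℕ => p i.1) ⁻¹' {a[i.1]} := by
    ext p
    rw [mem_cyl_iff]
    simp only [Set.mem_iInter, Set.mem_preimage, Set.mem_singleton_iff]
    exact ⟨fun h i => h i.1 i.2, fun h i hi => h ⟨i, hi⟩⟩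
  rw [this]
  exact isOpen_iInter_of_finite fun i =>
    (isOpen_discrete _).preimage (continuous_apply i.1)

lemma exists_section {X : Type*} [TopologicalSpace X] {V : List ℕ → Set X}
    {f : (ℕ → ℕ) → X} (hcov : Covers V Set.univ) (hf : IsSelector V f)
    {x : X} {a : List ℕ} (hx : x ∈ V a) : ∃ p ∈ cyl a, f p = x := by
  obtain ⟨q, hqa, hqf⟩ := exists_branch hcov hx
  have hxf : x ∈ flesh V := Set.mem_iUnion.mpr ⟨a, hx⟩
  have hcl : q ∈ closure (f ⁻¹' {x}) := (hf.2 x hxf).2 hqf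
  rcases mem_closure_iff.mp hcl (cyl a) (isOpen_cyl a) hqa with ⟨p, hp1, hp2⟩
  exact ⟨p, hp1, hp2⟩

lemma mem_scheme_of_mem_cyl {X : Type*} [TopologicalSpace X] {V : List ℕ → Set X}
    {f : (ℕ → ℕ) → X} (hf : IsSelector V f) (hflesh : flesh V = Set.univ)
    {p : ℕ → ℕ} {a : List ℕ} (hp : p ∈ cyl a) : f p ∈ V a := by
  have hb : p ∈ branches V (f p) := (hf.2 (f p) (by rw [hflesh]; trivial)).1 rfl
  have h2 : f p ∈ fruit V p := hb
  have h3 := Set.mem_iInter.mp h2 a.length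
  rwa [mem_cyl.mp hp] at h3

/-- The canonical basis for the topology `σ_{τ,f}`. -/
def sigmaBasis {X : Type*} [TopologicalSpace X] (f : (ℕ → ℕ) → X) : Set (Set (ℕ → ℕ)) :=
  {S | ∃ (U : Set X) (a : List ℕ), IsOpen U ∧ S = f ⁻¹' U ∩ cyl a}

lemma sigma_isBasis {X : Type*} [TopologicalSpace X] (f : (ℕ → ℕ) → X) :
    @TopologicalSpace.IsTopologicalBasis _ (sigmaTop f) (sigmaBasis f) := by
  refine @TopologicalSpace.IsTopologicalBasis.mk _ (sigmaTop f) _ ?_ ?_ ?_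
  · rintro t₁ ⟨U, a, hU, rfl⟩ t₂ ⟨U', b, hU', rfl⟩ x ⟨hx1, hx2⟩
    refine ⟨f ⁻¹' (U ∩ U') ∩ cyl (restrictSeq x (max a.length b.length)),
      ⟨U ∩ U', _, hU.inter hU', rfl⟩, ⟨⟨hx1.1, hx2.1⟩, mem_cyl_restrict x _⟩, ?_⟩
    rintro q ⟨hq1, hq2⟩
    have ha : a <+: restrictSeq x (max a.length b.length) :=
      prefix_of_mem_cyl hx1.2 (le_max_left _ _)
    have hb : b <+: restrictSeq x (max a.length b.length) :=
      prefix_of_mem_cyl hx2.2 (le_max_right _ _)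
    exact ⟨⟨hq1.1, cyl_mono ha hq2⟩, ⟨hq1.2, cyl_mono hb hq2⟩⟩
  · apply Set.eq_univ_of_univ_subset
    intro p _
    exact ⟨f ⁻¹' Set.univ ∩ cyl [], ⟨Set.univ, [], isOpen_univ, rfl⟩,
      by simp [cyl_nil]⟩
  · apply le_antisymm
    · rw [TopologicalSpace.le_generateFrom_iff_subset_isOpen]
      rintro S ⟨U, a, hU, rfl⟩
      exact TopologicalSpace.GenerateOpen.inter _ _
        (TopologicalSpace.GenerateOpen.basic _ (Or.inl ⟨U, hU, rfl⟩))
        (TopologicalSpace.GenerateOpen.basic _ (Or.inr ⟨a, rfl⟩))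
    · apply TopologicalSpace.generateFrom_anti
      rintro S (⟨U, hU, rfl⟩ | ⟨a, rfl⟩)
      · exact ⟨U, [], hU, by simp [cyl_nil]⟩
      · exact ⟨Set.univ, a, isOpen_univ, by simp⟩

/-- If there is a π-base Souslin scheme on X that covers X and has a
selector, then X is a continuous open image of a π-space. -/
theorem statement18 {X : Type} [TopologicalSpace X] (V : List ℕ → Set X)
    (hV : IsPiBaseScheme V) (hcov : Covers V Set.univ)
    (f : (ℕ → ℕ) → X) (hf : IsSelector V f) :
    IsContinuousOpenImageOfPiSpace X := by
  classical
  have hflesh : flesh V = Set.univ := by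
    apply Set.eq_univ_of_univ_subset
    rw [← hcov.1]
    exact Set.subset_iUnion (fun a => V a) []
  have hsurj : Function.Surjective f := fun x => by
    have h : x ∈ Set.range f := by rw [hf.1, hflesh]; trivial
    exact h
  have himg : ∀ (a : List ℕ) (p : ℕ → ℕ), p ∈ cyl a → f p ∈ V a :=
    fun a p hp => mem_scheme_of_mem_cyl hf hflesh hp
  refine ⟨ℕ → ℕ, sigmaTop f, f, ?_, ?_, ?_, hsurj⟩
  · -- π-space
    refine ⟨cyl, ?_, ⟨⟨cyl_nil, cyl_succ_eq⟩, fun a n m h => cyl_disjoint h⟩,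
      fun p => ⟨p, fruit_cyl p⟩, ?_, ?_⟩
    · intro a
      exact TopologicalSpace.GenerateOpen.basic _ (Or.inr ⟨a, rfl⟩)
    · rintro G ⟨a, rfl⟩
      exact ⟨TopologicalSpace.GenerateOpen.basic _ (Or.inr ⟨a, rfl⟩), cyl_nonempty a⟩
    · intro W hW hWne
      obtain ⟨q, hq⟩ := hWne
      obtain ⟨B, hB, hqB, hBW⟩ := @TopologicalSpace.IsTopologicalBasis.exists_subset_of_mem_open _ (sigmaTop f) _ (sigma_isBasis f) _ _ hq hW
      obtain ⟨U, a, hU, rfl⟩ := hB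
      have hUa : (U ∩ V a).Nonempty := ⟨f q, hqB.1, himg a q hqB.2⟩
      obtain ⟨b, hab, hVb⟩ := (hV.2 a).2 U hU hUa
      refine ⟨cyl b, ⟨b, rfl⟩, ?_⟩
      intro r hr
      exact hBW ⟨(hVb (himg b r hr)).1, cyl_mono hab hr⟩
  · -- continuity
    exact continuous_def.mpr fun U hU =>
      TopologicalSpace.GenerateOpen.basic _ (Or.inl ⟨U, hU, rfl⟩)
  · -- openness
    intro W hW
    rw [isOpen_iff_forall_mem_open]
    rintro x ⟨p, hpW, rfl⟩
    obtain ⟨B, hB, hpB, hBW⟩ := @TopologicalSpace.IsTopologicalBasis.exists_subset_of_mem_open _ (sigmaTop f) _ (sigma_isBasis f) _ _ hpW hW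
    obtain ⟨U, a, hU, rfl⟩ := hB
    refine ⟨U ∩ V a, ?_, hU.inter (hV.1 a), ⟨hpB.1, himg a p hpB.2⟩⟩
    rintro y ⟨hyU, hyVa⟩
    obtain ⟨q, hqa, rfl⟩ := exists_section hcov hf hyVa
    exact ⟨q, hBW ⟨hyU, hqa⟩, rfl⟩
end PiSpacePaper
end

section
/- If ⟨V_a⟩ is a Lusin π-base for a topological space X, then the family {V_a : a a finite sequence of natural numbers} is a π-base for X; consequently, every space that has a Lusin π-base is a π-space. -/
open Set Topology

namespace PiSpacePaper

/-- If V is a Lusin π-base for X, then {V_a} is a π-base for X;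
consequently, every space with a Lusin π-base is a π-space. -/
theorem statement19 {X : Type} [TopologicalSpace X] (V : List ℕ → Set X)
    (hV : IsLusinPiBase V) :
    IsPiBase {S : Set X | ∃ a : List ℕ, S = V a} ∧ IsPiSpace X := by
  obtain ⟨hopen, hpart, hstrict, hlusin⟩ := hV
  have hne : ∀ a : List ℕ, (V a).Nonempty := by
    intro a
    set p : ℕ → ℕ := fun i => a.getD i 0 with hp
    obtain ⟨x, hx⟩ := hstrict p
    have hxmem : x ∈ fruit V p := by rw [hx]; rfl
    have hmem := Set.mem_iInter.mp hxmem a.length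
    have hres : restrictSeq p a.length = a := by
      apply List.ext_getElem
      · simp [restrictSeq]
      · intro i h1 h2
        simp [restrictSeq, p, List.getD_eq_getElem, List.getElem?_eq_getElem h2]
    exact ⟨x, hres ▸ hmem⟩
  have hbase : IsPiBase {S : Set X | ∃ a : List ℕ, S = V a} := by
    constructor
    · rintro G ⟨a, rfl⟩; exact ⟨hopen a, hne a⟩
    · rintro U hU ⟨x, hxU⟩
      obtain ⟨a, n, hxa, hsub⟩ := hlusin x U hU hxU
      refine ⟨V (a ++ [n]), ⟨_, rfl⟩, ?_⟩
      intro y hy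
      exact hsub (Set.mem_iUnion.mpr ⟨n, Set.mem_iUnion.mpr ⟨le_refl n, hy⟩⟩)
  exact ⟨hbase, V, hopen, hpart, hstrict, hbase⟩
end PiSpacePaper
end
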